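/- arXiv:2412.07908 — 3 statements merged into one kernel-verified Lean document; each statement's English description precedes it below -/
import Mathlib

section
/- Let θ be irrational, r ∈ ℕ with r ≥ 1, σ ∈ ℕ with σ·{rθ} < 1, and suppose {rθ} = ‖rθ‖ (i.e., {rθ} < 1/2). If m ∈ ℕ and α ∈ (0,1) satisfy {mθ + α} + {σrθ} < 1, then for every k with 0 ≤ k ≤ σ, ⌊(m + kr)θ + α⌋ = ⌊mθ + α⌋ + k·⌊rθ⌋. -/
namespace Int

variable {R : Type*} [Ring R] [LinearOrder R] [IsOrderedRing R] [FloorRing R]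

theorem fract_natCast_mul_of_lt_one {b : R} {n : ℕ} (h : n * fract b < 1) :
    fract (n * b) = n * fract b :=
  fract_eq_iff.2
    ⟨by have := fract_nonneg b; positivity, h, n * ⌊b⌋, by push_cast [fract, mul_sub]; abel⟩

theorem floor_add_natCast_mul_of_fract_add_lt_one {a b : R} {n : ℕ}
    (h : fract a + n * fract b < 1) : ⌊a + n * b⌋ = ⌊a⌋ + n * ⌊b⌋ := by
  have hnonneg : 0 ≤ fract a + n * fract b := by
    have := fract_nonneg a; have := fract_nonneg b; positivity
  have hsplit : a + n * b = (fract a + n * fract b) + ((⌊a⌋ + n * ⌊b⌋ : ℤ) : R) := by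
    push_cast [fract, mul_sub]; abel
  rw [hsplit, floor_add_intCast, floor_eq_zero_iff.2 ⟨hnonneg, h⟩, zero_add]

end Int

theorem stmt5_general (θ : ℝ) (r : ℕ) (σ : ℕ)
    (hσr : (σ : ℝ) * Int.fract (r * θ) < 1)
    (m : ℕ) (α : ℝ)
    (hm : Int.fract ((m : ℝ) * θ + α) + Int.fract ((σ : ℝ) * r * θ) < 1) :
    ∀ k : ℕ, k ≤ σ →
      ⌊((m : ℝ) + k * r) * θ + α⌋ = ⌊(m : ℝ) * θ + α⌋ + k * ⌊(r : ℝ) * θ⌋ := by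
  intro k hk
  rw [mul_assoc, Int.fract_natCast_mul_of_lt_one hσr] at hm
  have hkσ : (k : ℝ) * Int.fract (r * θ) ≤ σ * Int.fract (r * θ) :=
    mul_le_mul_of_nonneg_right (by exact_mod_cast hk) (Int.fract_nonneg _)
  rw [show ((m : ℝ) + k * r) * θ + α = (m * θ + α) + k * (r * θ) by ring]
  exact Int.floor_add_natCast_mul_of_fract_add_lt_one (by linarith)

/-- If `θ` is irrational, `r ≥ 1`, `σ·{rθ} < 1`, `{rθ} < 1/2`, and
`{mθ + α} + {σrθ} < 1`, then for every `k ≤ σ`,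
`⌊(m + kr)θ + α⌋ = ⌊mθ + α⌋ + k·⌊rθ⌋`. -/
theorem stmt5 (θ : ℝ) (hθ : Irrational θ) (hθ0 : 0 < θ) (hθ1 : θ < 1)
    (r : ℕ) (hr : 1 ≤ r) (σ : ℕ)
    (hσr : (σ : ℝ) * Int.fract (r * θ) < 1)
    (hhalf : Int.fract ((r : ℝ) * θ) < 1 / 2)
    (m : ℕ) (α : ℝ) (hα0 : 0 < α) (hα1 : α < 1)
    (hm : Int.fract ((m : ℝ) * θ + α) + Int.fract ((σ : ℝ) * r * θ) < 1) :
    ∀ k : ℕ, k ≤ σ →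
      ⌊((m : ℝ) + k * r) * θ + α⌋ = ⌊(m : ℝ) * θ + α⌋ + k * ⌊(r : ℝ) * θ⌋ :=
  stmt5_general θ r σ hσr m α hm
end

section
/- Let f ∈ ℤ[x] be non-constant of degree σ-1 with leading coefficient a, and for ℓ with 0 ≤ ℓ ≤ σ-1 define p(x,y) := Σ_{k=0}^{ℓ} (-1)^k·C(σ,k)·(f(x + ky) - f(x + 1 + ky)) ∈ ℤ[x,y]. Then the coefficient of x^{σ-2} in p (viewing p as a polynomial in x with coefficients in ℤ[y]) equals a·(1-σ)·(-1)^ℓ·C(σ-1,ℓ), which is nonzero. -/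
/-!
Shifting the argument of `f` changes the coefficient of `x^{σ-2}` only through the linear term
of the Hasse derivative of order `σ - 2`, so every difference `f(x + ky) - f(x + 1 + ky)`
contributes the same constant `-(σ - 1)a`. What remains is the partial alternating sum
`Σ_{k ≤ ℓ} (-1)^k C(σ,k) = (-1)^ℓ C(σ-1,ℓ)`, which telescopes by Pascal's rule.
-/

open Polynomial

theorem Polynomial.eval_sub_eval_of_natDegree_le_one {R : Type*} [CommRing R] {h : R[X]}
    (hd : h.natDegree ≤ 1) (u v : R) : h.eval u - h.eval v = h.coeff 1 * (u - v) := by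
  rw [eq_X_add_C_of_natDegree_le_one hd]
  simp [mul_sub]

theorem Polynomial.coeff_comp_X_add_C_sub_comp_X_add_C {R : Type*} [CommRing R] {g : R[X]}
    {n : ℕ} (hg : g.natDegree = n + 1) (u v : R) :
    (g.comp (X + C u) - g.comp (X + C v)).coeff n = (n + 1) * g.leadingCoeff * (u - v) := by
  have hd : (hasseDeriv n g).natDegree ≤ 1 := by
    have := natDegree_hasseDeriv_le g n
    omega
  rw [coeff_sub, ← taylor_apply, ← taylor_apply, taylor_coeff, taylor_coeff,
    eval_sub_eval_of_natDegree_le_one hd, hasseDeriv_coeff, leadingCoeff, hg, add_comm 1 n,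
    Nat.choose_succ_self_right]
  push_cast
  ring

/-- Let `f ∈ ℤ[x]` be non-constant of degree `σ-1` with leading coefficient `a`, and for
`0 ≤ ℓ ≤ σ-1` let `p(x,y) := Σ_{k=0}^{ℓ} (-1)^k C(σ,k) (f(x+ky) - f(x+1+ky))`, viewed
as a polynomial in `x` over `ℤ[y]`.  Then the coefficient of `x^{σ-2}` in `p` equals
`a·(1-σ)·(-1)^ℓ·C(σ-1,ℓ)`, which is nonzero. -/
theorem stmt7 (σ : ℕ) (hσ : 2 ≤ σ) (f : Polynomial ℤ) (hdeg : f.natDegree = σ - 1)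
    (a : ℤ) (ha : a = f.leadingCoeff) (ℓ : ℕ) (hℓ : ℓ ≤ σ - 1)
    (p : Polynomial (Polynomial ℤ))
    (hp : p = ∑ k ∈ Finset.range (ℓ + 1),
        C (C ((-1 : ℤ) ^ k * (σ.choose k : ℤ))) *
          ((f.map (Polynomial.C : ℤ →+* Polynomial ℤ)).comp (X + C ((k : ℤ) • X)) -
           (f.map (Polynomial.C : ℤ →+* Polynomial ℤ)).comp (X + C (1 + (k : ℤ) • X)))) :
    p.coeff (σ - 2) = C (a * (1 - (σ : ℤ)) * (-1) ^ ℓ * ((σ - 1).choose ℓ : ℤ)) ∧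
      a * (1 - (σ : ℤ)) * (-1) ^ ℓ * ((σ - 1).choose ℓ : ℤ) ≠ 0 := by
  obtain ⟨n, rfl⟩ : ∃ n, σ = n + 2 := ⟨σ - 2, by omega⟩
  simp only [Nat.add_sub_cancel, show n + 2 - 1 = n + 1 from rfl] at hdeg hℓ ⊢
  have hg : (f.map (C : ℤ →+* ℤ[X])).natDegree = n + 1 := by
    rw [natDegree_map_eq_of_injective C_injective, hdeg]
  have hterm (k : ℕ) :
      ((f.map C).comp (X + C ((k : ℤ) • X)) - (f.map C).comp (X + C (1 + (k : ℤ) • X))).coeff n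
        = C (a * (1 - ((n + 2 : ℕ) : ℤ))) := by
    rw [coeff_comp_X_add_C_sub_comp_X_add_C hg, leadingCoeff_map_of_injective C_injective, ← ha,
      sub_add_cancel_right, map_mul, map_sub, map_one, map_natCast]
    push_cast
    ring
  refine ⟨?_, ?_⟩
  · rw [hp, finsetSum_coeff]
    simp_rw [coeff_C_mul, hterm, ← C_mul]
    rw [← map_sum, ← Finset.sum_mul, Int.alternating_sum_range_choose_eq_choose]
    ring_nf
  · have ha0 : a ≠ 0 := by
      rw [ha, Ne, leadingCoeff_eq_zero]
      rintro rfl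
      simp at hdeg
    have hchoose : ((n + 1).choose ℓ : ℤ) ≠ 0 := by exact_mod_cast (Nat.choose_pos hℓ).ne'
    have hσ1 : 1 - ((n + 2 : ℕ) : ℤ) ≠ 0 := by omega
    exact mul_ne_zero (mul_ne_zero (mul_ne_zero ha0 hσ1) (pow_ne_zero _ (by norm_num))) hchoose
end

section
/- Let β be an algebraic number that is not a root of unity with H(β) > 1, and let f ∈ K[x, x^{-1}] be a Laurent polynomial with at most k+1 terms over a number field K. Suppose f = g + h where every monomial of g has degree at most d_0 and every monomial of h has degree at least d_1. If d_1 - d_0 > log(k·H(f))/log H(β) and f(β) = 0, then g(β) = 0 and h(β) = 0. -/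
open NumberField IsDedekindDomain Finset Classical

/-- The order of `x ∈ K` at the finite place `v` (junk value `0` at `x = 0`). -/
noncomputable def finOrd {K : Type*} [Field K] [NumberField K]
    (v : HeightOneSpectrum (𝓞 K)) (x : K) : ℤ :=
  if h : v.valuation K x = 0 then 0 else - Multiplicative.toAdd (WithZero.unzero h)

/-- The normalized `v`-adic absolute value `|x|_v = N(𝔭)^{-ord_𝔭(x)/d}` of `x ∈ K`,
where `d = [K : ℚ]` (with the convention `|0|_v = 0`). -/
noncomputable def finAbs {K : Type*} [Field K] [NumberField K]
    (v : HeightOneSpectrum (𝓞 K)) (x : K) : ℝ :=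
  if x = 0 then 0 else
    (Ideal.absNorm v.asIdeal : ℝ) ^
      (-(finOrd v x : ℝ) / (Module.finrank ℚ K : ℝ))

/-- The absolute Weil height of the projective point with homogeneous coordinates
`a = (a i)_{i : ι}` in a number field `K`: the product over all infinite places `w`
of `(max_i w (a i))^{mult w / d}` times the product over all finite places `v` of
`max_i |a i|_v` (for each tuple, all but finitely many finite factors equal `1`). -/
noncomputable def weilHeight {K : Type*} [Field K] [NumberField K]
    {ι : Type*} [Fintype ι] (a : ι → K) : ℝ :=
  (∏ w : InfinitePlace K,
      (⨆ i, w (a i)) ^ ((InfinitePlace.mult w : ℝ) / (Module.finrank ℚ K : ℝ))) *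
    ∏ᶠ v : HeightOneSpectrum (𝓞 K), ⨆ i, finAbs v (a i)

/-- The absolute Weil height `H(β) = H([1 : β])` of an element `β` of a number field. -/
noncomputable def weilHeightElem {K : Type*} [Field K] [NumberField K] (β : K) : ℝ :=
  weilHeight ![1, β]

/-- The height `H(f)` of a Laurent polynomial: the height of the projective point given
by its vector of coefficients. -/
noncomputable def weilHeightLaurent {K : Type*} [Field K] [NumberField K]
    (f : LaurentPolynomial K) : ℝ :=
  weilHeight (fun i : f.coeff.support => f.coeff i.1)

/-- Evaluation of a Laurent polynomial at a nonzero element of a field. -/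
noncomputable def laurentEval {K : Type*} [Field K]
    (f : LaurentPolynomial K) (β : K) : K :=
  ∑ i ∈ f.coeff.support, f.coeff i * β ^ i

/-!
Suppose `u = g(β) ≠ 0`, so that `u = -h(β)`. At a place `v` with `|β|_v ≥ 1` every term of
`g(β) β^{-d₀}` is bounded by a coefficient of `f`, and at a place with `|β|_v ≤ 1` so is every
term of `h(β) β^{-d₁}`. Either way `max(|u β^{-d₀}|_v, |u β^{-d₁}|_v) ≤ c_v · max_j |f_j|_v`,
with `c_v = k` at archimedean places (there are at most `k` terms) and `c_v = 1` at the others.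
Multiplying over all places, the left side becomes the height of `[u β^{-d₀} : u β^{-d₁}] =
[β^{d₁-d₀} : 1]`, whence `H(β)^{d₁-d₀} ≤ k H(f)`, contradicting the gap. Only the product
formula is used, so the estimate holds for relative heights over any field with admissible
absolute values; over a number field `K`, `H` is the `[K : ℚ]`-th root of the relative height.
-/

namespace Real

lemma iSup_rpow {ι : Type*} [Finite ι] [Nonempty ι] {f : ι → ℝ} (hf : ∀ i, 0 ≤ f i) {r : ℝ}
    (hr : 0 ≤ r) : (⨆ i, f i) ^ r = ⨆ i, f i ^ r := by
  obtain ⟨i₀, hi₀⟩ := exists_eq_ciSup_of_finite (f := f)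
  refine le_antisymm ?_ (ciSup_le fun i ↦ ?_)
  · rw [← hi₀]
    exact Finite.le_ciSup_of_le i₀ le_rfl
  · exact rpow_le_rpow (hf i) (Finite.le_ciSup_of_le i le_rfl) hr

lemma finprod_rpow {α : Type*} {f : α → ℝ} (hf : f.HasFiniteMulSupport) (hf₀ : ∀ a, 0 ≤ f a)
    (r : ℝ) : (∏ᶠ a, f a) ^ r = ∏ᶠ a, f a ^ r := by
  have hfin : f.mulSupport.Finite := hf
  have hsupp : (fun a ↦ f a ^ r).mulSupport ⊆ hfin.toFinset := fun a ha ↦ by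
    simp only [Set.Finite.coe_toFinset, Function.mem_mulSupport] at ha ⊢
    exact fun h ↦ ha (by simp [h])
  rw [finprod_eq_prod_of_mulSupport_subset f hfin.coe_toFinset.ge,
    finprod_eq_prod_of_mulSupport_subset _ hsupp, finsetProd_rpow _ _ fun a _ ↦ hf₀ a]

end Real

section SupportGap

variable {R : Type*} [Semiring R] {g h : LaurentPolynomial R} {d₀ d₁ : ℤ}

lemma disjoint_support_of_gap (hd : d₀ < d₁) (hg : ∀ i ∈ g.coeff.support, i ≤ d₀)
    (hh : ∀ i ∈ h.coeff.support, d₁ ≤ i) : Disjoint g.coeff.support h.coeff.support :=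
  Finset.disjoint_left.mpr fun i hig hih ↦ by linarith [hg i hig, hh i hih]

lemma support_add_of_disjoint (hgh : Disjoint g.coeff.support h.coeff.support) :
    (g + h).coeff.support = g.coeff.support ∪ h.coeff.support := by
  rw [AddMonoidAlgebra.coeff_add, Finsupp.support_add_eq hgh]

lemma coeff_add_of_mem_left (hgh : Disjoint g.coeff.support h.coeff.support) {i : ℤ}
    (hi : i ∈ g.coeff.support) : (g + h).coeff i = g.coeff i := by
  rw [AddMonoidAlgebra.coeff_add, Finsupp.add_apply,
    Finsupp.notMem_support_iff.mp (Finset.disjoint_left.mp hgh hi), add_zero]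

lemma coeff_add_of_mem_right (hgh : Disjoint g.coeff.support h.coeff.support) {i : ℤ}
    (hi : i ∈ h.coeff.support) : (g + h).coeff i = h.coeff i := by
  rw [add_comm, coeff_add_of_mem_left hgh.symm hi]

lemma card_support_le_of_disjoint {k : ℕ} (hgh : Disjoint g.coeff.support h.coeff.support)
    (hh₀ : h.coeff.support.Nonempty) (hterms : #(g + h).coeff.support ≤ k + 1) :
    #g.coeff.support ≤ k := by
  rw [support_add_of_disjoint hgh, card_union_of_disjoint hgh] at hterms
  have := hh₀.card_pos
  omega

lemma support_add_nonempty_of_disjoint (hgh : Disjoint g.coeff.support h.coeff.support)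
    (hg₀ : g.coeff.support.Nonempty) : (g + h).coeff.support.Nonempty := by
  rw [support_add_of_disjoint hgh]
  exact hg₀.mono subset_union_left

end SupportGap

section LaurentEval

variable {K : Type*} [Field K]

lemma laurentEval_add (g h : LaurentPolynomial K) (β : K) :
    laurentEval (g + h) β = laurentEval g β + laurentEval h β := by
  simp only [laurentEval, AddMonoidAlgebra.coeff_add]
  exact Finsupp.sum_add_index' (h := fun i a ↦ a * β ^ i) (by simp) fun _ _ _ ↦ add_mul ..

lemma laurentEval_mul_zpow_neg (p : LaurentPolynomial K) {β : K} (hβ : β ≠ 0) (d : ℤ) :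
    laurentEval p β * β ^ (-d) = ∑ i ∈ p.coeff.support, p.coeff i * β ^ (i - d) := by
  simp only [laurentEval, Finset.sum_mul, mul_assoc, ← zpow_add₀ hβ, sub_eq_add_neg]

variable (v : AbsoluteValue K ℝ) {p : LaurentPolynomial K} {β : K} {d : ℤ} {B : ℝ}

lemma abv_coeff_mul_zpow_le (hcoeff : ∀ i ∈ p.coeff.support, v (p.coeff i) ≤ B)
    (hpow : ∀ i ∈ p.coeff.support, v β ^ (i - d) ≤ 1) :
    ∀ i ∈ p.coeff.support, v (p.coeff i * β ^ (i - d)) ≤ B := fun i hi ↦ by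
  rw [map_mul, map_zpow₀]
  exact (mul_le_of_le_one_right (v.nonneg _) (hpow i hi)).trans (hcoeff i hi)

lemma abv_laurentEval_mul_zpow_neg_le (hβ : β ≠ 0)
    (hcoeff : ∀ i ∈ p.coeff.support, v (p.coeff i) ≤ B)
    (hpow : ∀ i ∈ p.coeff.support, v β ^ (i - d) ≤ 1) :
    v (laurentEval p β * β ^ (-d)) ≤ #p.coeff.support * B := by
  rw [laurentEval_mul_zpow_neg p hβ, ← nsmul_eq_mul]
  exact (v.sum_le _ _).trans (Finset.sum_le_card_nsmul _ _ _ (abv_coeff_mul_zpow_le v hcoeff hpow))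

lemma abv_laurentEval_mul_zpow_neg_le_of_isNonarchimedean (hv : IsNonarchimedean v) (hβ : β ≠ 0)
    (hB : 0 ≤ B) (hcoeff : ∀ i ∈ p.coeff.support, v (p.coeff i) ≤ B)
    (hpow : ∀ i ∈ p.coeff.support, v β ^ (i - d) ≤ 1) :
    v (laurentEval p β * β ^ (-d)) ≤ B := by
  rw [laurentEval_mul_zpow_neg p hβ]
  rcases p.coeff.support.eq_empty_or_nonempty with hp | hp
  · simpa [hp] using hB
  exact (hv.apply_sum_le_sup hp).trans (Finset.sup'_le _ _ (abv_coeff_mul_zpow_le v hcoeff hpow))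

lemma iSup_abv_mul_zpow_neg_pair_le {β u : K} (hβ : β ≠ 0) {d₀ d₁ : ℤ} (hd : d₀ ≤ d₁)
    (hlow : 1 ≤ v β → v (u * β ^ (-d₀)) ≤ B) (hhigh : v β ≤ 1 → v (u * β ^ (-d₁)) ≤ B) :
    ⨆ i, v (![u * β ^ (-d₀), u * β ^ (-d₁)] i) ≤ B := by
  have hvβ : 0 < v β := v.pos hβ
  have hshift (a b : ℤ) : v (u * β ^ (-a)) = v (u * β ^ (-b)) * v β ^ (b - a) := by
    rw [map_mul, map_mul, map_zpow₀, map_zpow₀, mul_assoc, ← zpow_add₀ hvβ.ne']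
    ring_nf
  refine ciSup_le (Fin.forall_fin_two.mpr ⟨?_, ?_⟩) <;>
    simp only [Matrix.cons_val_zero, Matrix.cons_val_one] <;>
    rcases le_total 1 (v β) with h1 | h1
  · exact hlow h1
  · rw [hshift d₀ d₁]
    exact (mul_le_of_le_one_right (v.nonneg _) (zpow_le_one₀ hvβ h1 (by omega))).trans (hhigh h1)
  · rw [hshift d₁ d₀]
    exact (mul_le_of_le_one_right (v.nonneg _) (zpow_le_one_of_nonpos₀ h1 (by omega))).trans
      (hlow h1)
  · exact hhigh h1

end LaurentEval

section Heights

open Height AdmissibleAbsValues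

variable {K : Type*} [Field K] [AdmissibleAbsValues K] {ι ι' : Type*} [Finite ι] [Finite ι']

lemma hasFiniteMulSupport_iSup_nonarchAbsVal {x : ι → K} (hx : x ≠ 0) :
    (fun v : nonarchAbsVal ↦ ⨆ i, v.val (x i)).HasFiniteMulSupport := by
  obtain ⟨i₀, hi₀⟩ := Function.ne_iff.mp hx
  have : Nonempty ι := ⟨i₀⟩
  refine (Set.finite_iUnion fun i : {i // x i ≠ 0} ↦ hasFiniteMulSupport i.2).subset
    fun v hv ↦ ?_
  by_contra! hone
  simp only [Set.mem_iUnion, Function.mem_mulSupport, not_exists, not_not] at hone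
  refine hv (le_antisymm (ciSup_le fun i ↦ ?_) (Finite.le_ciSup_of_le i₀ (hone ⟨i₀, hi₀⟩).ge))
  by_cases hi : x i = 0
  · simp [hi]
  · exact (hone ⟨i, hi⟩).le

lemma mulHeight_le_pow_totalWeight_mul {x : ι → K} {y : ι' → K} (hx : x ≠ 0) (hy : y ≠ 0)
    {C : ℝ} (harch : ∀ v ∈ archAbsVal, ⨆ i, v (x i) ≤ C * ⨆ j, v (y j))
    (hnonarch : ∀ v ∈ nonarchAbsVal, ⨆ i, v (x i) ≤ ⨆ j, v (y j)) :
    mulHeight x ≤ C ^ totalWeight K * mulHeight y := by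
  have hsup₀ (v : AbsoluteValue K ℝ) : 0 ≤ ⨆ i, v (x i) := Real.iSup_nonneg fun _ ↦ v.nonneg _
  have hprod : (archAbsVal.map fun v ↦ ⨆ i, v (x i)).prod ≤
      C ^ totalWeight K * (archAbsVal.map fun v ↦ ⨆ j, v (y j)).prod := by
    rw [totalWeight, ← Multiset.prod_replicate, ← Multiset.map_const', ← Multiset.prod_map_mul]
    exact Multiset.prod_map_le_prod_map₀ _ _ (fun v _ ↦ hsup₀ v) harch
  rw [mulHeight_eq hx, mulHeight_eq hy, ← mul_assoc]
  exact mul_le_mul hprod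
    (finprod_le_finprod (hasFiniteMulSupport_iSup_nonarchAbsVal hx) (fun v ↦ hsup₀ v.val)
      (hasFiniteMulSupport_iSup_nonarchAbsVal hy) fun v ↦ hnonarch v.val v.prop)
    (finprod_nonneg fun v ↦ hsup₀ v.val)
    ((Multiset.prod_map_nonneg fun v _ ↦ hsup₀ v).trans hprod)

end Heights

section GapPrinciple

variable {K : Type*} [Field K]

lemma iSup_abv_le_of_laurentEval_add_eq_zero (v : AbsoluteValue K ℝ) {β : K} (hβ : β ≠ 0)
    {g h : LaurentPolynomial K} {k : ℕ} (hterms : #(g + h).coeff.support ≤ k + 1) {d₀ d₁ : ℤ}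
    (hd : d₀ < d₁) (hg : ∀ i ∈ g.coeff.support, i ≤ d₀) (hh : ∀ i ∈ h.coeff.support, d₁ ≤ i)
    (hgh : laurentEval g β + laurentEval h β = 0) (hgβ : laurentEval g β ≠ 0) {C : ℝ}
    -- the bound `C` is `k · max_j |f_j|_v` in general and `max_j |f_j|_v` if `v` is ultrametric
    (hpoly : ∀ (p : LaurentPolynomial K) (d : ℤ), #p.coeff.support ≤ k →
      (∀ i ∈ p.coeff.support, v (p.coeff i) ≤ ⨆ j : (g + h).coeff.support, v ((g + h).coeff j)) →
      (∀ i ∈ p.coeff.support, v β ^ (i - d) ≤ 1) → v (laurentEval p β * β ^ (-d)) ≤ C) :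
    ⨆ i, v (![laurentEval g β * β ^ (-d₀), laurentEval g β * β ^ (-d₁)] i) ≤ C := by
  have hhβ : laurentEval h β = -laurentEval g β := eq_neg_of_add_eq_zero_right hgh
  have hdisj := disjoint_support_of_gap hd hg hh
  have hsupp := support_add_of_disjoint hdisj
  have hg₀ := Finset.nonempty_of_sum_ne_zero hgβ
  have hh₀ := Finset.nonempty_of_sum_ne_zero (hhβ ▸ neg_ne_zero.mpr hgβ)
  refine iSup_abv_mul_zpow_neg_pair_le v hβ hd.le (fun h1 ↦ ?_) (fun h1 ↦ ?_)
  · refine hpoly g d₀ (card_support_le_of_disjoint hdisj hh₀ hterms)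
      (fun i hi ↦ Finite.le_ciSup_of_le ⟨i, hsupp ▸ mem_union_left _ hi⟩ ?_)
      (fun i hi ↦ zpow_le_one_of_nonpos₀ h1 (by linarith [hg i hi]))
    rw [coeff_add_of_mem_left hdisj hi]
  · rw [← neg_neg (laurentEval g β), ← hhβ, neg_mul, v.map_neg]
    refine hpoly h d₁ (card_support_le_of_disjoint hdisj.symm hg₀ (add_comm g h ▸ hterms))
      (fun i hi ↦ Finite.le_ciSup_of_le ⟨i, hsupp ▸ mem_union_right _ hi⟩ ?_)
      (fun i hi ↦ zpow_le_one₀ (v.pos hβ) h1 (by linarith [hh i hi]))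
    rw [coeff_add_of_mem_right hdisj hi]

open Height AdmissibleAbsValues in
theorem mulHeight₁_zpow_le_of_laurentEval_add_eq_zero [AdmissibleAbsValues K] {β : K}
    (hβ : β ≠ 0) {g h : LaurentPolynomial K} {k : ℕ} (hterms : #(g + h).coeff.support ≤ k + 1)
    {d₀ d₁ : ℤ} (hd : d₀ < d₁) (hg : ∀ i ∈ g.coeff.support, i ≤ d₀)
    (hh : ∀ i ∈ h.coeff.support, d₁ ≤ i) (hgh : laurentEval g β + laurentEval h β = 0)
    (hgβ : laurentEval g β ≠ 0) :
    mulHeight₁ (β ^ (d₁ - d₀)) ≤ k ^ totalWeight K * (g + h).coeff.mulHeight := by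
  set u := laurentEval g β
  have hx : ![u * β ^ (-d₀), u * β ^ (-d₁)] ≠ 0 :=
    Function.ne_iff.mpr ⟨0, mul_ne_zero hgβ (zpow_ne_zero _ hβ)⟩
  obtain ⟨i₀, hi₀⟩ := support_add_nonempty_of_disjoint (disjoint_support_of_gap hd hg hh)
    (Finset.nonempty_of_sum_ne_zero hgβ)
  have hy : (fun j : (g + h).coeff.support ↦ (g + h).coeff j) ≠ 0 :=
    Function.ne_iff.mpr ⟨⟨i₀, hi₀⟩, Finsupp.mem_support_iff.mp hi₀⟩
  have hM₀ (v : AbsoluteValue K ℝ) : 0 ≤ ⨆ j : (g + h).coeff.support, v ((g + h).coeff j) :=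
    Real.iSup_nonneg fun _ ↦ v.nonneg _
  rw [← neg_sub_neg, zpow_sub₀ hβ, ← mul_div_mul_left _ _ hgβ, mulHeight₁_div_eq_mulHeight,
    Finsupp.mulHeight]
  refine mulHeight_le_pow_totalWeight_mul hx hy
    (fun v _ ↦ iSup_abv_le_of_laurentEval_add_eq_zero v hβ hterms hd hg hh hgh hgβ
      fun p d hk hcoeff hpow ↦ (abv_laurentEval_mul_zpow_neg_le v hβ hcoeff hpow).trans
        (mul_le_mul_of_nonneg_right (by exact_mod_cast hk) (hM₀ v)))
    (fun v hv ↦ iSup_abv_le_of_laurentEval_add_eq_zero v hβ hterms hd hg hh hgh hgβ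
      fun p d _ hcoeff hpow ↦ abv_laurentEval_mul_zpow_neg_le_of_isNonarchimedean v
        (isNonarchimedean v hv) hβ (hM₀ v) hcoeff hpow)

end GapPrinciple

section AbsoluteHeight

variable {K : Type*} [Field K] [NumberField K]

open Height

lemma finAbs_eq_rpow (v : HeightOneSpectrum (𝓞 K)) (x : K) :
    finAbs v x = FinitePlace.mk v x ^ (Module.finrank ℚ K : ℝ)⁻¹ := by
  rcases eq_or_ne x 0 with rfl | hx
  · simp [finAbs, Module.finrank_pos.ne']
  have hv : v.valuation K x ≠ 0 := by simpa using hx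
  rw [finAbs, if_neg hx, finOrd, dif_neg hv, FinitePlace.mk_apply, FinitePlace.norm_embedding',
    WithZeroMulInt.toNNReal_neg_apply _ hv, NNReal.coe_zpow, ← Real.rpow_intCast,
    ← Real.rpow_mul (by positivity)]
  push_cast
  ring_nf

lemma weilHeight_eq_mulHeight_rpow {ι : Type*} [Fintype ι] {a : ι → K} (ha : a ≠ 0) :
    weilHeight a = mulHeight a ^ (Module.finrank ℚ K : ℝ)⁻¹ := by
  have : Nonempty ι := (Function.ne_iff.mp ha).nonempty
  have hsup₀ (w : AbsoluteValue K ℝ) : 0 ≤ ⨆ i, w (a i) := Real.iSup_nonneg fun _ ↦ w.nonneg _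
  have hsupI (w : InfinitePlace K) : 0 ≤ ⨆ i, w (a i) := hsup₀ w.val
  have hsupF (w : FinitePlace K) : 0 ≤ ⨆ i, w (a i) := hsup₀ w.val
  rw [weilHeight, NumberField.mulHeight_eq ha,
    Real.mul_rpow (Finset.prod_nonneg fun w _ ↦ pow_nonneg (hsupI w) _) (finprod_nonneg hsupF),
    ← Real.finsetProd_rpow _ _ fun w _ ↦ pow_nonneg (hsupI w) _,
    Real.finprod_rpow (f := fun w : FinitePlace K ↦ ⨆ i, w (a i))
      (hasFiniteMulSupport_iSup_nonarchAbsVal ha) hsupF,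
    ← finprod_comp_equiv FinitePlace.equivHeightOneSpectrum.symm]
  congr 1
  · refine Finset.prod_congr rfl fun w _ ↦ ?_
    rw [← Real.rpow_natCast, ← Real.rpow_mul (hsupI w), div_eq_mul_inv]
  · refine finprod_congr fun v ↦ ?_
    simp_rw [finAbs_eq_rpow, FinitePlace.mk_apply, FinitePlace.equivHeightOneSpectrum_symm_apply]
    exact (Real.iSup_rpow (fun _ ↦ norm_nonneg _) (inv_nonneg.mpr (Nat.cast_nonneg _))).symm

lemma weilHeight_of_isEmpty {ι : Type*} [Fintype ι] [IsEmpty ι] (a : ι → K) :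
    weilHeight a = 0 := by
  have hmult (w : InfinitePlace K) : (w.mult : ℝ) / Module.finrank ℚ K ≠ 0 := by
    have := w.mult_ne_zero
    have := (Module.finrank_pos (R := ℚ) (M := K)).ne'
    positivity
  obtain ⟨w⟩ := (inferInstance : Nonempty (InfinitePlace K))
  rw [weilHeight, Finset.prod_eq_zero (Finset.mem_univ w) (by simp [Real.zero_rpow (hmult w)]),
    zero_mul]

lemma weilHeightElem_eq_rpow (β : K) :
    weilHeightElem β = mulHeight₁ β ^ (Module.finrank ℚ K : ℝ)⁻¹ := by
  rw [weilHeightElem, weilHeight_eq_mulHeight_rpow (Function.ne_iff.mpr ⟨0, one_ne_zero⟩),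
    mulHeight₁_eq_mulHeight, mulHeight_swap]

lemma weilHeightLaurent_eq_rpow {f : LaurentPolynomial K} (hf : f.coeff.support.Nonempty) :
    weilHeightLaurent f = f.coeff.mulHeight ^ (Module.finrank ℚ K : ℝ)⁻¹ := by
  obtain ⟨i, hi⟩ := hf
  exact weilHeight_eq_mulHeight_rpow (Function.ne_iff.mpr ⟨⟨i, hi⟩, Finsupp.mem_support_iff.mp hi⟩)

lemma log_natCast_mul_weilHeightLaurent_nonneg (k : ℕ) (f : LaurentPolynomial K) :
    0 ≤ Real.log (k * weilHeightLaurent f) := by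
  rcases f.coeff.support.eq_empty_or_nonempty with hf | hf
  · have : IsEmpty f.coeff.support := Finset.isEmpty_coe_sort.mpr hf
    simp [weilHeightLaurent, weilHeight_of_isEmpty]
  rcases k.eq_zero_or_pos with rfl | hk
  · simp
  refine Real.log_nonneg (one_le_mul_of_one_le_of_one_le (by exact_mod_cast hk) ?_)
  rw [weilHeightLaurent_eq_rpow hf]
  exact Real.one_le_rpow (one_le_mulHeight _) (by positivity)

lemma weilHeightElem_pow_le_of_mulHeight₁_zpow_le {β : K} {f : LaurentPolynomial K}
    (hf : f.coeff.support.Nonempty) {k : ℕ} {m : ℤ}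
    (h : mulHeight₁ (β ^ m) ≤ k ^ totalWeight K * f.coeff.mulHeight) :
    weilHeightElem β ^ m.natAbs ≤ k * weilHeightLaurent f := by
  have hd : Module.finrank ℚ K ≠ 0 := Module.finrank_pos.ne'
  rw [mulHeight₁_zpow, totalWeight_eq_finrank] at h
  calc weilHeightElem β ^ m.natAbs
      = (mulHeight₁ β ^ m.natAbs) ^ (Module.finrank ℚ K : ℝ)⁻¹ := by
        rw [weilHeightElem_eq_rpow, Real.rpow_pow_comm (mulHeight₁_nonneg β)]
    _ ≤ (k ^ Module.finrank ℚ K * f.coeff.mulHeight) ^ (Module.finrank ℚ K : ℝ)⁻¹ := by gcongr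
    _ = k * weilHeightLaurent f := by
        have hM : 0 ≤ f.coeff.mulHeight := (mulHeight_pos _).le
        rw [Real.mul_rpow (by positivity) hM,
          Real.pow_rpow_inv_natCast (Nat.cast_nonneg k) hd, weilHeightLaurent_eq_rpow hf]

end AbsoluteHeight

theorem stmt18_general {K : Type*} [Field K] [NumberField K] (β : K)
    (hHβ : 1 < weilHeightElem β)
    (f g h : LaurentPolynomial K) (k : ℕ) (hterms : f.coeff.support.card ≤ k + 1)
    (hfgh : f = g + h) (d₀ d₁ : ℤ)
    (hg : ∀ i ∈ g.coeff.support, i ≤ d₀) (hh : ∀ i ∈ h.coeff.support, d₁ ≤ i)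
    (hgap : Real.log ((k : ℝ) * weilHeightLaurent f) / Real.log (weilHeightElem β) <
      ((d₁ : ℝ) - (d₀ : ℝ)))
    (hfβ : laurentEval f β = 0) :
    laurentEval g β = 0 ∧ laurentEval h β = 0 := by
  have hgh : laurentEval g β + laurentEval h β = 0 := by rw [← laurentEval_add, ← hfgh, hfβ]
  suffices hgβ : laurentEval g β = 0 from ⟨hgβ, by linear_combination hgh - hgβ⟩
  by_contra hgβ
  have hβ : β ≠ 0 := by
    rintro rfl
    simp [weilHeightElem_eq_rpow] at hHβ
  have hlogβ : 0 < Real.log (weilHeightElem β) := Real.log_pos hHβ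
  have hd : d₀ < d₁ := by
    have := (div_nonneg (log_natCast_mul_weilHeightLaurent_nonneg k f) hlogβ.le).trans_lt hgap
    exact_mod_cast sub_pos.mp this
  subst hfgh
  have hpow := weilHeightElem_pow_le_of_mulHeight₁_zpow_le
    (support_add_nonempty_of_disjoint (disjoint_support_of_gap hd hg hh)
      (Finset.nonempty_of_sum_ne_zero hgβ))
    (mulHeight₁_zpow_le_of_laurentEval_add_eq_zero hβ hterms hd hg hh hgh hgβ)
  have hlog := Real.log_le_log (by positivity) hpow
  rw [Real.log_pow, Nat.cast_natAbs, abs_of_pos (sub_pos.mpr hd), Int.cast_sub] at hlog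
  rw [div_lt_iff₀ hlogβ] at hgap
  linarith

/-- Gap principle (Proposition 2.3 of Lenstra): let `β` be an algebraic number, not a
root of unity, with `H(β) > 1`, and let `f ∈ K[x,x⁻¹]` be a Laurent polynomial with at
most `k+1` terms over a number field `K`, with `f = g + h` where every monomial of `g`
has degree at most `d₀` and every monomial of `h` has degree at least `d₁`.  If
`d₁ - d₀ > log(k·H(f))/log H(β)` and `f(β) = 0`, then `g(β) = 0` and `h(β) = 0`. -/
theorem stmt18 {K : Type*} [Field K] [NumberField K] (β : K)
    (hroot : ∀ n : ℕ, 0 < n → β ^ n ≠ 1) (hHβ : 1 < weilHeightElem β)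
    (f g h : LaurentPolynomial K) (k : ℕ) (hterms : f.coeff.support.card ≤ k + 1)
    (hfgh : f = g + h) (d₀ d₁ : ℤ)
    (hg : ∀ i ∈ g.coeff.support, i ≤ d₀) (hh : ∀ i ∈ h.coeff.support, d₁ ≤ i)
    (hgap : Real.log ((k : ℝ) * weilHeightLaurent f) / Real.log (weilHeightElem β) <
      ((d₁ : ℝ) - (d₀ : ℝ)))
    (hfβ : laurentEval f β = 0) :
    laurentEval g β = 0 ∧ laurentEval h β = 0 :=
  stmt18_general β hHβ f g h k hterms hfgh d₀ d₁ hg hh hgap hfβ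
end
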